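/- Every computable function δ : ℝ → ℝ in the sense of Lacombe (via nested oracles of rational intervals) is continuous. -/

import Mathlib

/-- φ is a nested oracle for the real number x: a sequence of nested open rational
intervals whose intersection is {x}. -/
def NestedOracle (φ : ℕ → ℚ × ℚ) (x : ℝ) : Prop :=
  (∀ m, Set.Ioo ((φ (m + 1)).1 : ℝ) ((φ (m + 1)).2 : ℝ) ⊆
    Set.Ioo ((φ m).1 : ℝ) ((φ m).2 : ℝ)) ∧
  (⋂ m, Set.Ioo ((φ m).1 : ℝ) ((φ m).2 : ℝ)) = {x}

/-!
An oracle for `x` reveals only finitely much about `x` at each stage: the intervals of a nested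
oracle form a neighbourhood basis of `x`, and any oracle prefix ending with an interval containing
`y` extends to an oracle for `y`. Hence if `ξ` maps oracles for `x` to oracles for `δ x`, then `δ`
maps the `m`-th interval of an oracle into the `m`-th interval of its image, which is continuity
at `x` expressed in the two neighbourhood bases.
-/

open Set Filter Topology

section OrdConnected

variable {α : Type*} [LinearOrder α]

lemma Set.OrdConnected.subset_Ioi_of_notMem {s : Set α} (hs : s.OrdConnected) {a x : α}
    (hx : x ∈ s) (ha : a ∉ s) (hax : a < x) : s ⊆ Ioi a :=
  fun _ hz => not_le.1 fun hza => ha (hs.out hz hx ⟨hza, hax.le⟩)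

lemma Set.OrdConnected.subset_Iio_of_notMem {s : Set α} (hs : s.OrdConnected) {b x : α}
    (hx : x ∈ s) (hb : b ∉ s) (hxb : x < b) : s ⊆ Iio b :=
  fun _ hz => not_le.1 fun hbz => hb (hs.out hx hz ⟨hxb.le, hbz⟩)

lemma exists_subset_Ioo_of_iInter_eq_singleton {s : ℕ → Set α} (hanti : Antitone s)
    (hs : ∀ m, (s m).OrdConnected) {x a b : α} (hx : ⋂ m, s m = {x}) (hax : a < x)
    (hxb : x < b) : ∃ m, s m ⊆ Ioo a b := by
  have hmem : ∀ m, x ∈ s m := mem_iInter.1 (hx ▸ mem_singleton x)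
  have hout : ∀ y ≠ x, ∃ m, y ∉ s m := fun y hy =>
    not_forall.1 fun hy' => hy (by simpa [hx] using mem_iInter.2 hy')
  obtain ⟨i, hi⟩ := hout a hax.ne
  obtain ⟨j, hj⟩ := hout b hxb.ne'
  refine ⟨max i j, fun z hz => ⟨?_, ?_⟩⟩
  · exact (hs i).subset_Ioi_of_notMem (hmem i) hi hax (hanti (le_max_left i j) hz)
  · exact (hs j).subset_Iio_of_notMem (hmem j) hj hxb (hanti (le_max_right i j) hz)

end OrdConnected

def ratIoo (I : ℚ × ℚ) : Set ℝ := Ioo (I.1 : ℝ) I.2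

lemma nestedOracle_iff {φ : ℕ → ℚ × ℚ} {x : ℝ} :
    NestedOracle φ x ↔ Antitone (fun m => ratIoo (φ m)) ∧ ⋂ m, ratIoo (φ m) = {x} :=
  and_congr_left' ⟨antitone_nat_of_succ_le (f := fun m => ratIoo (φ m)), fun h m => h m.le_succ⟩

namespace NestedOracle

variable {φ : ℕ → ℚ × ℚ} {x : ℝ}

lemma antitone (h : NestedOracle φ x) : Antitone fun m => ratIoo (φ m) :=
  (nestedOracle_iff.1 h).1

lemma iInter_eq (h : NestedOracle φ x) : ⋂ m, ratIoo (φ m) = {x} :=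
  (nestedOracle_iff.1 h).2

lemma mem (h : NestedOracle φ x) (m : ℕ) : x ∈ ratIoo (φ m) :=
  mem_iInter.1 (h.iInter_eq ▸ mem_singleton x) m

lemma hasBasis_nhds (h : NestedOracle φ x) :
    (𝓝 x).HasBasis (fun _ => True) fun m => ratIoo (φ m) := by
  refine ⟨fun U => ⟨fun hU => ?_, fun ⟨m, _, hm⟩ => mem_of_superset ?_ hm⟩⟩
  · obtain ⟨a, b, hx, hab⟩ := mem_nhds_iff_exists_Ioo_subset.1 hU
    obtain ⟨m, hm⟩ := exists_subset_Ioo_of_iInter_eq_singleton h.antitone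
      (fun m => ordConnected_Ioo) h.iInter_eq hx.1 hx.2
    exact ⟨m, trivial, hm.trans hab⟩
  · exact isOpen_Ioo.mem_nhds (h.mem m)

lemma splice {θ : ℕ → ℚ × ℚ} {y : ℝ} (hφ : Antitone fun k => ratIoo (φ k))
    (hθ : NestedOracle θ y) {m : ℕ} (hsub : ratIoo (θ 0) ⊆ ratIoo (φ m)) :
    NestedOracle (fun k => if k ≤ m then φ k else θ (k - (m + 1))) y := by
  have hφθ : ∀ k ≤ m, ∀ j, ratIoo (θ j) ⊆ ratIoo (φ k) := fun k hk j =>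
    (hθ.antitone j.zero_le).trans (hsub.trans (hφ hk))
  refine nestedOracle_iff.2 ⟨fun k l hkl => ?_, Subset.antisymm ?_ ?_⟩
  · dsimp only
    split_ifs with hl hk hk
    · exact hφ hkl
    · omega
    · exact hφθ k hk _
    · exact hθ.antitone (by omega)
  · rw [← hθ.iInter_eq]
    refine iInter_mono' fun j => ⟨j + (m + 1), ?_⟩
    rw [if_neg (by omega), Nat.add_sub_cancel]
  · refine singleton_subset_iff.2 (mem_iInter.2 fun k => ?_)
    split_ifs with hk
    · exact hφθ k hk 0 (hθ.mem 0)
    · exact hθ.mem _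

end NestedOracle

lemma exists_nestedOracle_subset {y : ℝ} {I : ℚ × ℚ} (hy : y ∈ ratIoo I) :
    ∃ θ, NestedOracle θ y ∧ ratIoo (θ 0) ⊆ ratIoo I := by
  obtain ⟨u, hu_mono, hu_lt, hu_lim⟩ := Real.exists_seq_rat_strictMono_tendsto y
  obtain ⟨v, hv_anti, hv_gt, hv_lim⟩ := Real.exists_seq_rat_strictAnti_tendsto y
  have hsub : ∀ m n, m ≤ n → ratIoo (max I.1 (u n), min I.2 (v n)) ⊆
      ratIoo (max I.1 (u m), min I.2 (v m)) := fun m n hmn =>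
    Ioo_subset_Ioo (Rat.cast_le.2 (max_le_max_left _ (hu_mono.monotone hmn)))
      (Rat.cast_le.2 (min_le_min_left _ (hv_anti.antitone hmn)))
  refine ⟨fun n => (max I.1 (u n), min I.2 (v n)), nestedOracle_iff.2 ⟨hsub, ?_⟩, ?_⟩
  · refine Subset.antisymm (fun z hz => ?_) (singleton_subset_iff.2 (mem_iInter.2 fun n => ?_))
    · have hz' : ∀ n, (u n : ℝ) < z ∧ z < v n := fun n => by
        have := mem_iInter.1 hz n
        simp only [ratIoo, Rat.cast_max, Rat.cast_min, mem_Ioo, max_lt_iff, lt_min_iff] at this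
        exact ⟨this.1.2, this.2.2⟩
      exact le_antisymm (ge_of_tendsto' hv_lim fun n => (hz' n).2.le)
        (le_of_tendsto' hu_lim fun n => (hz' n).1.le)
    · simpa [ratIoo] using ⟨⟨hy.1, hu_lt n⟩, hy.2, hv_gt n⟩
  · exact Ioo_subset_Ioo (Rat.cast_le.2 (le_max_left _ _)) (Rat.cast_le.2 (min_le_left _ _))

lemma exists_nestedOracle (x : ℝ) : ∃ φ, NestedOracle φ x := by
  obtain ⟨p, hp⟩ := exists_rat_lt x
  obtain ⟨q, hq⟩ := exists_rat_gt x
  obtain ⟨φ, hφ, -⟩ := exists_nestedOracle_subset (I := (p, q)) ⟨hp, hq⟩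
  exact ⟨φ, hφ⟩

lemma mapsTo_ratIoo_of_forall_nestedOracle {δ : ℝ → ℝ} {ξ : ℚ × ℚ → ℚ × ℚ}
    (hξ : ∀ φ x, NestedOracle φ x → NestedOracle (fun m => ξ (φ m)) (δ x))
    {φ : ℕ → ℚ × ℚ} {x : ℝ} (hφ : NestedOracle φ x) (m : ℕ) :
    MapsTo δ (ratIoo (φ m)) (ratIoo (ξ (φ m))) := fun y hy => by
  obtain ⟨θ, hθ, hθφ⟩ := exists_nestedOracle_subset hy
  simpa using (hξ _ y (hθ.splice hφ.antitone hθφ)).mem m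

/-- Every Lacombe-computable function δ : ℝ → ℝ is continuous. -/
theorem lacombe_computable_continuous (δ : ℝ → ℝ)
    (h : ∃ ξ : ℚ × ℚ → ℚ × ℚ, Computable ξ ∧
      ∀ (φ : ℕ → ℚ × ℚ) (x : ℝ), NestedOracle φ x →
        NestedOracle (fun m => ξ (φ m)) (δ x)) :
    Continuous δ := by
  obtain ⟨ξ, -, hξ⟩ := h
  refine continuous_iff_continuousAt.2 fun x => ?_
  obtain ⟨φ, hφ⟩ := exists_nestedOracle x
  exact (hφ.hasBasis_nhds.tendsto_iff (hξ φ x hφ).hasBasis_nhds).2 fun m _ =>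
    ⟨m, trivial, mapsTo_ratIoo_of_forall_nestedOracle hξ hφ m⟩
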